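/- Let R be a commutative ring and J_n the nilpotent n×n Jordan block with n > 1. Then for the Frobenius system (E, X_i = J_n^i, Y_i = J_n^{n-1-i}) of S_n(J_n,R)/R, there is no element d ∈ S_n(J_n,R) with ∑_{i=0}^{n-1} J_n^i d J_n^{n-1-i} = I; i.e., S_n(J_n,R)/R is not separable. (Here one uses that every d ∈ S_n(J_n,R) is a polynomial in J_n, so each summand J_n^i d J_n^{n-1-i} = d J_n^{n-1}, whose (1,1) entry is 0.) -/
import Mathlib


/-- The nilpotent Jordan block: ones on the superdiagonal, zeros elsewhere. -/
def jordanBlock (n : ℕ) (R : Type*) [CommRing R] : Matrix (Fin n) (Fin n) R :=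
  Matrix.of fun i j => if (i : ℕ) + 1 = (j : ℕ) then 1 else 0

lemma jordanBlock_pow_apply (n : ℕ) (R : Type*) [CommRing R] (m : ℕ) (i j : Fin n) :
    ((jordanBlock n R) ^ m) i j = if (i : ℕ) + m = (j : ℕ) then 1 else 0 := by
  induction m generalizing j with
  | zero =>
    simp [Matrix.one_apply, Fin.ext_iff]
  | succ m ih =>
    rw [pow_succ, Matrix.mul_apply]
    simp only [ih]
    simp only [jordanBlock, Matrix.of_apply]
    by_cases h : (i : ℕ) + m < n
    · rw [Finset.sum_eq_single (⟨(i : ℕ) + m, h⟩ : Fin n)]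
      · rw [if_pos rfl, one_mul]
        rfl
      · intro k _ hk
        rw [if_neg fun hc => hk (Fin.ext hc.symm), zero_mul]
      · simp
    · have hj := j.is_lt
      rw [if_neg (by omega)]
      apply Finset.sum_eq_zero
      intro k _
      have hk := k.is_lt
      rw [if_neg (by omega), zero_mul]

/-- For `n > 1`, with the Frobenius system `X_i = J^i`, `Y_i = J^{n-1-i}` of
`S_n(J_n,R)/R`, there is no `d` in the centralizer of `J_n` with
`∑_i J^i d J^{n-1-i} = I`; that is, `S_n(J_n,R)/R` is not separable. -/
theorem stmt_18 (R : Type*) [CommRing R] [Nontrivial R] (n : ℕ) (hn : 1 < n) :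
    ¬ ∃ d : Matrix (Fin n) (Fin n) R,
        d * jordanBlock n R = jordanBlock n R * d ∧
        ∑ i : Fin n, (jordanBlock n R) ^ (i : ℕ) * d *
            (jordanBlock n R) ^ (n - 1 - (i : ℕ)) = 1 := by
  rintro ⟨d, hcomm, hsum⟩
  set J := jordanBlock n R with hJ
  have hcomm' : Commute J d := hcomm.symm
  have hterm : ∀ i : Fin n, J ^ (i : ℕ) * d * J ^ (n - 1 - (i : ℕ)) = d * J ^ (n - 1) := by
    intro i
    have he : (i : ℕ) + (n - 1 - (i : ℕ)) = n - 1 := by have := i.is_lt; omega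
    rw [(hcomm'.pow_left (i : ℕ)).eq, mul_assoc, ← pow_add, he]
  rw [Finset.sum_congr rfl (fun i _ => hterm i)] at hsum
  rw [Finset.sum_const, Finset.card_univ, Fintype.card_fin] at hsum
  have h00 := congrFun (congrFun hsum ⟨0, by omega⟩) ⟨0, by omega⟩
  have hz : (d * J ^ (n - 1)) ⟨0, by omega⟩ ⟨0, by omega⟩ = 0 := by
    rw [Matrix.mul_apply]
    apply Finset.sum_eq_zero
    intro k _
    rw [jordanBlock_pow_apply]
    simp only [if_neg (by omega : ¬ ((k : ℕ) + (n - 1) = 0)), mul_zero]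
  rw [Matrix.smul_apply, hz, smul_zero, Matrix.one_apply_eq] at h00
  exact one_ne_zero h00.symm
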